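/- arXiv:1511.03622 — 7 statements merged into one kernel-verified Lean document; each statement's English description precedes it below -/
import Mathlib

section
/- Let X be a locally compact metric space and F : X → 𝒫(X) an upper semicontinuous multivalued map with compact values. Let N ⊆ X be an isolating neighbourhood for F (i.e., N is compact and Inv N ⊆ int N). Then for every neighbourhood W of Inv N there exists a weak index pair P = (P₁,P₂) in N such that P₁ \ P₂ ⊆ W. -/
/-!
Let `Γ(A)` be the set of endpoints of chains of `F` in `N` issued from `A`, and `Inv⁺ N` the set
of points with a forward solution in `N`. Take an open `U` with `Inv N ⊆ U ⊆ int N ∩ int W`, a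
small closed neighbourhood `A ⊆ U` of `Inv N`, and put `P₁ = Γ(A)`, `P₂ = Γ(P₁ \ U)`.
Everything rests on the compactness of the set of solutions in the compact set `N`, the graph
of `F` being closed. Backward solutions in `N` come back to `A`, so `P₁` is closed. If `A` is
small enough, no point of `P₁ \ U` lies in `Inv⁺ N`; hence chains in `N` from `P₁ \ U` have
bounded length and `P₂` is compact, and `P₂` misses `Inv N`, since a chain from `P₁ \ U` to
a point of `Inv N` would continue forever in `N`.
-/

open Set Topology

/-- The image of a set under a multivalued map. -/
def MVImage {Y : Type*} (F : Y → Set Y) (A : Set Y) : Set Y :=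
  ⋃ y ∈ A, F y

/-- Upper semicontinuity of a multivalued map: the large counter image of every
closed set is closed. -/
def IsUSC {Y : Type*} [TopologicalSpace Y] (F : Y → Set Y) : Prop :=
  ∀ B : Set Y, IsClosed B → IsClosed {y | (F y ∩ B).Nonempty}

/-- The invariant part of `N` with respect to `F`: points admitting a full
solution (in `N`) through them. -/
def InvPart {Y : Type*} (F : Y → Set Y) (N : Set Y) : Set Y :=
  {y | ∃ σ : ℤ → Y, (∀ n : ℤ, σ n ∈ N) ∧ σ 0 = y ∧ ∀ n : ℤ, σ (n + 1) ∈ F (σ n)}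

/-- The `F`-boundary of a set `A`: `cl A ∩ cl (F(A) \ A)`. -/
def FBoundary {Y : Type*} [TopologicalSpace Y] (F : Y → Set Y) (A : Set Y) : Set Y :=
  closure A ∩ closure (MVImage F A \ A)

/-- `(P₁, P₂)` is a weak index pair for `F` in `N`. -/
structure IsWeakIndexPair {Y : Type*} [TopologicalSpace Y] (F : Y → Set Y)
    (N P₁ P₂ : Set Y) : Prop where
  compact₁ : IsCompact P₁
  compact₂ : IsCompact P₂
  subset₂₁ : P₂ ⊆ P₁
  subset₁N : P₁ ⊆ N
  mapsInto₁ : MVImage F P₁ ∩ N ⊆ P₁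
  mapsInto₂ : MVImage F P₂ ∩ N ⊆ P₂
  fBoundary_subset : FBoundary F P₁ ⊆ P₂
  inv_subset : InvPart F N ⊆ interior (P₁ \ P₂)
  diff_subset : P₁ \ P₂ ⊆ interior N

open Filter Metric

theorem exists_strictMono_const_or_tendsto_atTop (n : ℕ → ℕ) :
    ∃ φ : ℕ → ℕ, StrictMono φ ∧ ((∃ n₀, ∀ k, n (φ k) = n₀) ∨ Tendsto (n ∘ φ) atTop atTop) := by
  by_cases h : ∃ n₀, ∃ᶠ k in atTop, n k = n₀
  · obtain ⟨n₀, h⟩ := h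
    obtain ⟨φ, hφ, hφn⟩ := extraction_of_frequently_atTop h
    exact ⟨φ, hφ, .inl ⟨n₀, hφn⟩⟩
  · push Not at h
    refine ⟨id, strictMono_id, .inr (tendsto_atTop.2 fun m => ?_)⟩
    filter_upwards [(finite_Iio m).eventually_all.2 fun i _ => h i] with k hk
    by_contra hlt
    exact hk (n k) (not_le.1 hlt) rfl

theorem mem_closure_of_tendsto_of_mem_cthickening {ι α : Type*} [PseudoMetricSpace α]
    {l : Filter ι} [l.NeBot] {x : ι → α} {ε : ι → ℝ} {a : α} {s : Set α}
    (hx : Tendsto x l (𝓝 a)) (hε : Tendsto ε l (𝓝 0))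
    (hmem : ∀ᶠ i in l, x i ∈ cthickening (ε i) s) : a ∈ closure s := by
  rw [closure_eq_iInter_cthickening]
  refine mem_iInter₂.2 fun δ hδ => isClosed_cthickening.mem_of_tendsto hx ?_
  filter_upwards [hmem, hε.eventually (gt_mem_nhds hδ)] with i hi hlt
  exact cthickening_mono hlt.le s hi

theorem IsUSC.isClosed_graph {X : Type*} [MetricSpace X] {F : X → Set X} (hF : IsUSC F)
    (hFc : ∀ x, IsCompact (F x)) : IsClosed {p : X × X | p.2 ∈ F p.1} := by
  refine isClosed_iff_nhds.2 fun ⟨x, y⟩ h => by_contra fun hy => ?_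
  obtain ⟨ε, hε, hball⟩ := isOpen_iff.1 (hFc x).isClosed.isOpen_compl y hy
  have hfar : x ∈ {z | (F z ∩ closedBall y (ε / 2)).Nonempty}ᶜ := fun ⟨w, hwF, hw⟩ =>
    hball (closedBall_subset_ball (half_lt_self hε) hw) hwF
  obtain ⟨⟨z, w⟩, ⟨hz, hw⟩, hzw⟩ := h _ (prod_mem_nhds
    ((hF _ isClosed_closedBall).isOpen_compl.mem_nhds hfar) (ball_mem_nhds y (half_pos hε)))
  exact hz ⟨w, hzw, ball_subset_closedBall hw⟩

theorem mem_MVImage {X : Type*} {F : X → Set X} {B : Set X} {y : X} :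
    y ∈ MVImage F B ↔ ∃ x ∈ B, y ∈ F x := by
  simp [MVImage]

theorem fBoundary_subset_of_mvImage_inter_subset {X : Type*} [TopologicalSpace X]
    {F : X → Set X} {N B : Set X} (hB : IsClosed B) (hBN : MVImage F B ∩ N ⊆ B) :
    FBoundary F B ⊆ B \ interior N := by
  rintro y ⟨hyB, hy⟩
  have hout : MVImage F B \ B ⊆ (interior N)ᶜ := fun w ⟨hw, hwB⟩ hwN =>
    hwB (hBN ⟨hw, interior_subset hwN⟩)
  exact ⟨hB.closure_subset hyB, closure_minimal hout isOpen_interior.isClosed_compl hy⟩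

section Solutions

variable {X : Type*} {F : X → Set X} {N : Set X}

def IsSolutionOn (F : X → Set X) (σ : ℤ → X) (I : Set ℤ) : Prop :=
  ∀ j ∈ I, σ (j + 1) ∈ F (σ j)

theorem IsSolutionOn.mono {σ : ℤ → X} {I J : Set ℤ} (h : IsSolutionOn F σ I) (hJI : J ⊆ I) :
    IsSolutionOn F σ J :=
  fun j hj => h j (hJI hj)

theorem IsSolutionOn.comp_add_right {σ : ℤ → X} {I : Set ℤ} (h : IsSolutionOn F σ I) (a : ℤ) :
    IsSolutionOn F (fun j => σ (j + a)) ((· + a) ⁻¹' I) :=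
  fun j hj => by simpa only [add_right_comm j 1 a] using h _ hj

def splice (σ ρ : ℤ → X) (a : ℤ) : ℤ → X := fun j => if j ≤ a then σ j else ρ j

theorem splice_of_le {σ ρ : ℤ → X} {a j : ℤ} (hj : j ≤ a) : splice σ ρ a j = σ j :=
  if_pos hj

theorem splice_of_ge {σ ρ : ℤ → X} {a j : ℤ} (h : σ a = ρ a) (hj : a ≤ j) :
    splice σ ρ a j = ρ j := by
  rcases hj.eq_or_lt with rfl | hj
  · exact (if_pos le_rfl).trans h
  · exact if_neg hj.not_ge

theorem splice_mem {σ ρ : ℤ → X} {a : ℤ} {s : Set X} (hσ : ∀ j ≤ a, σ j ∈ s)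
    (hρ : ∀ j ≥ a, ρ j ∈ s) (j : ℤ) : splice σ ρ a j ∈ s := by
  unfold splice
  split_ifs with h
  exacts [hσ j h, hρ j (by omega)]

theorem IsSolutionOn.splice {σ ρ : ℤ → X} {a : ℤ} {I : Set ℤ}
    (hσ : IsSolutionOn F σ (I ∩ Iio a)) (hρ : IsSolutionOn F ρ (I ∩ Ici a)) (h : σ a = ρ a) :
    IsSolutionOn F (splice σ ρ a) I := by
  intro j hj
  rcases lt_or_ge j a with hja | hja
  · rw [splice_of_le (j := j + 1) (by omega), splice_of_le hja.le]
    exact hσ j ⟨hj, hja⟩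
  · rw [splice_of_ge (j := j + 1) h (by omega), splice_of_ge h hja]
    exact hρ j ⟨hj, hja⟩

theorem mem_invPart {σ : ℤ → X} (hσN : ∀ j, σ j ∈ N) (hσ : IsSolutionOn F σ univ) :
    σ 0 ∈ InvPart F N :=
  ⟨σ, hσN, rfl, fun j => hσ j trivial⟩

theorem invPart_subset : InvPart F N ⊆ N := by
  rintro _ ⟨σ, hσN, rfl, -⟩
  exact hσN 0

theorem mem_invPart_of_isSolutionOn_Ici {τ : ℤ → X} {a : ℤ} (ha : a ≤ 0) (hτN : ∀ j, τ j ∈ N)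
    (hτ : IsSolutionOn F τ (Ici a)) (hτa : τ a ∈ InvPart F N) : τ 0 ∈ InvPart F N := by
  obtain ⟨ρ, hρN, hρ0, hρ⟩ := hτa
  have hρa : ρ (a + -a) = τ a := by simpa using hρ0
  have hρ' : IsSolutionOn F (fun j => ρ (j + -a)) (univ ∩ Iio a) :=
    (IsSolutionOn.comp_add_right (fun j _ => hρ j : IsSolutionOn F ρ univ) (-a)).mono
      fun _ _ => mem_univ _
  have hsol := hρ'.splice (hτ.mono inter_subset_right) hρa
  have h := mem_invPart (splice_mem (fun j _ => hρN _) (fun j _ => hτN j)) hsol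
  rwa [splice_of_ge hρa ha] at h

def InvPlus (F : X → Set X) (N : Set X) : Set X :=
  {x | ∃ σ : ℤ → X, (∀ j ≥ 0, σ j ∈ N) ∧ σ 0 = x ∧ IsSolutionOn F σ (Ici 0)}

end Solutions

section Orbits

variable {X : Type*} {F : X → Set X} {N : Set X}

def stepIn (F : X → Set X) (N B : Set X) : Set X := MVImage F B ∩ N

def forwardOrbit (F : X → Set X) (N A : Set X) : Set X := ⋃ m : ℕ, (stepIn F N)^[m] A

theorem iterate_stepIn_subset {A : Set X} (hA : A ⊆ N) : ∀ m, (stepIn F N)^[m] A ⊆ N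
  | 0 => hA
  | _ + 1 => by rw [Function.iterate_succ_apply']; exact inter_subset_right

/-- Chains are recorded as solutions on `[-m, 0)` ending at time `0`; outside that window they
take arbitrary values in `N`. -/
theorem mem_iterate_stepIn_iff {A : Set X} (hA : A ⊆ N) {m : ℕ} {x : X} :
    x ∈ (stepIn F N)^[m] A ↔ ∃ σ : ℤ → X, (∀ j, σ j ∈ N) ∧ σ (-m) ∈ A ∧ σ 0 = x ∧
      IsSolutionOn F σ (Ico (-m) 0) := by
  induction m generalizing A x with
  | zero =>
    refine ⟨fun hx => ⟨fun _ => x, fun _ => hA hx, hx, rfl, by simp [IsSolutionOn]⟩, ?_⟩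
    rintro ⟨σ, -, hσA, rfl, -⟩
    simpa using hσA
  | succ m ih =>
    rw [Function.iterate_succ_apply, ih (A := stepIn F N A) inter_subset_right]
    constructor
    · rintro ⟨σ, hσN, ⟨hσA, -⟩, hσx, hσ⟩
      obtain ⟨a, ha, hσa⟩ := mem_MVImage.1 hσA
      set b : ℤ := -((m + 1 : ℕ) : ℤ)
      refine ⟨Function.update σ b a, fun j => ?_, by rwa [Function.update_self], ?_, ?_⟩
      · rcases eq_or_ne j b with rfl | hj
        · rw [Function.update_self]; exact hA ha
        · rw [Function.update_of_ne hj]; exact hσN j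
      · rwa [Function.update_of_ne (show (0 : ℤ) ≠ b by omega)]
      · intro j ⟨hj₁, hj₂⟩
        rw [Function.update_of_ne (show j + 1 ≠ b by omega)]
        rcases eq_or_ne j b with rfl | hj
        · rwa [Function.update_self, show b + 1 = -m by omega]
        · rw [Function.update_of_ne hj]
          exact hσ j ⟨by omega, hj₂⟩
    · rintro ⟨σ, hσN, hσA, hσx, hσ⟩
      refine ⟨σ, hσN, ⟨mem_MVImage.2 ⟨_, hσA, ?_⟩, hσN _⟩, hσx, hσ.mono ?_⟩
      · simpa [show -((m + 1 : ℕ) : ℤ) + 1 = -m by omega] using hσ (-(m + 1 : ℕ)) ⟨le_rfl, by omega⟩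
      · exact Ico_subset_Ico_left (by omega)

theorem subset_forwardOrbit {A : Set X} : A ⊆ forwardOrbit F N A :=
  subset_iUnion_of_subset 0 subset_rfl

theorem forwardOrbit_subset {A : Set X} (hA : A ⊆ N) : forwardOrbit F N A ⊆ N :=
  iUnion_subset (iterate_stepIn_subset hA)

theorem mvImage_forwardOrbit_inter_subset {A : Set X} :
    MVImage F (forwardOrbit F N A) ∩ N ⊆ forwardOrbit F N A := by
  rintro y ⟨hy, hyN⟩
  obtain ⟨x, hx, hyx⟩ := mem_MVImage.1 hy
  obtain ⟨m, hm⟩ := mem_iUnion.1 hx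
  refine mem_iUnion.2 ⟨m + 1, ?_⟩
  rw [Function.iterate_succ_apply']
  exact ⟨mem_MVImage.2 ⟨x, hm, hyx⟩, hyN⟩

theorem forwardOrbit_subset_of_mvImage_inter_subset {A B : Set X} (hAB : A ⊆ B)
    (hB : MVImage F B ∩ N ⊆ B) : forwardOrbit F N A ⊆ B := by
  refine iUnion_subset fun m => ?_
  induction m with
  | zero => exact hAB
  | succ m ih =>
    rw [Function.iterate_succ_apply']
    rintro y ⟨hy, hyN⟩
    obtain ⟨x, hx, hyx⟩ := mem_MVImage.1 hy
    exact hB ⟨mem_MVImage.2 ⟨x, ih hx, hyx⟩, hyN⟩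

theorem disjoint_invPart_forwardOrbit {E : Set X} (hEN : E ⊆ N)
    (hEplus : Disjoint E (InvPlus F N)) : Disjoint (InvPart F N) (forwardOrbit F N E) := by
  refine disjoint_left.2 fun x ⟨ρ, hρN, hρ0, hρ⟩ hx => ?_
  obtain ⟨m, hm⟩ := mem_iUnion.1 hx
  obtain ⟨σ, hσN, hσE, hσx, hσ⟩ := (mem_iterate_stepIn_iff hEN).1 hm
  have hσρ : σ 0 = ρ 0 := hσx.trans hρ0.symm
  have hsol : IsSolutionOn F (splice σ ρ 0) (Ici (-m)) :=
    (hσ.mono fun j hj => ⟨hj.1, hj.2⟩).splice (fun j _ => hρ j) hσρ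
  refine hEplus.ne_of_mem hσE ⟨fun j => splice σ ρ 0 (j + -m),
    fun j _ => splice_mem (fun j _ => hσN j) (fun j _ => hρN j) _, ?_,
    (hsol.comp_add_right (-m)).mono fun j hj => by
      simp only [mem_Ici, mem_preimage] at hj ⊢; omega⟩ rfl
  simp only [zero_add]
  exact splice_of_le (by omega)

end Orbits

section Compactness

variable {X : Type*} [MetricSpace X] {F : X → Set X} {N : Set X}

theorem exists_subseq_tendsto_solution (hF : IsClosed {p : X × X | p.2 ∈ F p.1})
    (hN : IsCompact N) {σ : ℕ → ℤ → X} (hσN : ∀ k j, σ k j ∈ N) :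
    ∃ τ : ℤ → X, ∃ φ : ℕ → ℕ, StrictMono φ ∧ (∀ j, τ j ∈ N) ∧
      (∀ j, Tendsto (fun k => σ (φ k) j) atTop (𝓝 (τ j))) ∧
      IsSolutionOn F τ {j | ∀ᶠ k in atTop, σ k (j + 1) ∈ F (σ k j)} := by
  obtain ⟨τ, hτ, φ, hφ, hlim⟩ :=
    (isCompact_univ_pi fun _ : ℤ => hN).isSeqCompact fun k j _ => hσN k j
  have hlim' := tendsto_pi_nhds.1 hlim
  refine ⟨τ, φ, hφ, fun j => hτ j trivial, hlim', fun j hj => ?_⟩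
  exact hF.mem_of_tendsto ((hlim' j).prodMk_nhds (hlim' (j + 1))) (hφ.tendsto_atTop.eventually hj)

theorem isCompact_invPart (hF : IsClosed {p : X × X | p.2 ∈ F p.1}) (hN : IsCompact N) :
    IsCompact (InvPart F N) := by
  refine hN.of_isClosed_subset (IsSeqClosed.isClosed fun u x hu hux => ?_) invPart_subset
  choose σ hσN hσ0 hσ using hu
  obtain ⟨τ, φ, hφ, hτN, hlim, hτ⟩ := exists_subseq_tendsto_solution hF hN hσN
  have hτx : τ 0 = x :=
    tendsto_nhds_unique (hlim 0) ((hux.comp hφ.tendsto_atTop).congr fun k => (hσ0 (φ k)).symm)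
  exact hτx ▸ mem_invPart hτN (hτ.mono fun j _ => Eventually.of_forall fun k => hσ k j)

theorem isClosed_iterate_stepIn (hF : IsClosed {p : X × X | p.2 ∈ F p.1}) (hN : IsCompact N)
    {A : Set X} (hA : IsClosed A) (hAN : A ⊆ N) (m : ℕ) :
    IsClosed ((stepIn F N)^[m] A) := by
  refine IsSeqClosed.isClosed fun u x hu hux => ?_
  choose σ hσN hσA hσ0 hσ using fun k => (mem_iterate_stepIn_iff hAN).1 (hu k)
  obtain ⟨τ, φ, hφ, hτN, hlim, hτ⟩ := exists_subseq_tendsto_solution hF hN hσN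
  refine (mem_iterate_stepIn_iff hAN).2 ⟨τ, hτN,
    hA.mem_of_tendsto (hlim _) (Eventually.of_forall fun k => hσA _),
    tendsto_nhds_unique (hlim 0) ?_, hτ.mono fun j hj => Eventually.of_forall fun k => hσ k j hj⟩
  exact (hux.comp hφ.tendsto_atTop).congr fun k => (hσ0 (φ k)).symm

/-- Shifts of a backward solution accumulate on full solutions in `N`. -/
theorem exists_mem_of_isSolutionOn_Iio (hF : IsClosed {p : X × X | p.2 ∈ F p.1})
    (hN : IsCompact N) {V : Set X} (hV : IsOpen V) (hSV : InvPart F N ⊆ V) {τ : ℤ → X}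
    (hτN : ∀ j, τ j ∈ N) (hτ : IsSolutionOn F τ (Iio 0)) : ∃ J : ℕ, τ (-J) ∈ V := by
  by_contra! h
  obtain ⟨ρ, φ, -, hρN, hlim, hρ⟩ := exists_subseq_tendsto_solution hF hN
    (σ := fun J j => τ (j + -J)) fun _ _ => hτN _
  have hρsol : IsSolutionOn F ρ univ := hρ.mono fun j _ => by
    filter_upwards [eventually_gt_atTop j.toNat] with J hJ
    exact hτ.comp_add_right (-J) j (show j + -J < 0 by omega)
  refine hV.isClosed_compl.mem_of_tendsto (hlim 0) (Eventually.of_forall fun k => ?_)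
    (hSV (mem_invPart hρN hρsol))
  simpa using h (φ k)

theorem isClosed_forwardOrbit (hF : IsClosed {p : X × X | p.2 ∈ F p.1}) (hN : IsCompact N)
    {A : Set X} (hA : IsClosed A) (hAN : A ⊆ N) (hSA : InvPart F N ⊆ interior A) :
    IsClosed (forwardOrbit F N A) := by
  refine IsSeqClosed.isClosed fun u x hu hux => ?_
  choose n hn using fun k => mem_iUnion.1 (hu k)
  obtain ⟨φ, hφ, ⟨n₀, hn₀⟩ | hφn⟩ := exists_strictMono_const_or_tendsto_atTop n
  · refine mem_iUnion.2 ⟨n₀, (isClosed_iterate_stepIn hF hN hA hAN n₀).mem_of_tendsto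
      (hux.comp hφ.tendsto_atTop) (Eventually.of_forall fun k => ?_)⟩
    simpa only [Function.comp, hn₀ k] using hn (φ k)
  · choose σ hσN hσA hσ0 hσ using fun k => (mem_iterate_stepIn_iff hAN).1 (hn (φ k))
    obtain ⟨τ, ψ, hψ, hτN, hlim, hτ⟩ := exists_subseq_tendsto_solution hF hN hσN
    have hτx : τ 0 = x := tendsto_nhds_unique (hlim 0)
      ((hux.comp (hφ.comp hψ).tendsto_atTop).congr fun k => (hσ0 (ψ k)).symm)
    have hback : IsSolutionOn F τ (Iio 0) := fun j hj => hτ j (by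
      filter_upwards [(tendsto_natCast_atTop_atTop.comp hφn).eventually_ge_atTop (-j)] with k hk
      exact hσ k j ⟨by simp only [Function.comp] at hk; omega, hj⟩)
    obtain ⟨J, hJ⟩ := exists_mem_of_isSolutionOn_Iio hF hN isOpen_interior hSA hτN hback
    exact mem_iUnion.2 ⟨J, (mem_iterate_stepIn_iff hAN).2
      ⟨τ, hτN, interior_subset hJ, hτx, hback.mono fun j hj => hj.2⟩⟩

theorem mem_invPart_of_tendsto (hF : IsClosed {p : X × X | p.2 ∈ F p.1}) (hN : IsCompact N)
    {g : ℕ → ℤ → X} {n : ℕ → ℕ} {ε : ℕ → ℝ} (hε : Tendsto ε atTop (𝓝 0))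
    (hgN : ∀ k j, g k j ∈ N) (hgS : ∀ k, g k (-n k) ∈ cthickening (ε k) (InvPart F N))
    (hg : ∀ k, IsSolutionOn F (g k) (Ici (-n k))) {y : X}
    (hy : Tendsto (fun k => g k 0) atTop (𝓝 y)) : y ∈ InvPart F N := by
  obtain ⟨φ, hφ, hn⟩ := exists_strictMono_const_or_tendsto_atTop n
  obtain ⟨τ, ψ, hψ, hτN, hlim, hτ⟩ :=
    exists_subseq_tendsto_solution hF hN (σ := fun k => g (φ k)) fun k => hgN (φ k)
  rw [← tendsto_nhds_unique (hlim 0) (hy.comp (hφ.comp hψ).tendsto_atTop)]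
  rcases hn with ⟨n₀, hn₀⟩ | hn
  · refine mem_invPart_of_isSolutionOn_Ici (a := -n₀) (by omega) hτN
      (fun j hj => hτ j (Eventually.of_forall fun k => hg (φ k) j (by simpa [hn₀] using hj))) ?_
    rw [← (isCompact_invPart hF hN).isClosed.closure_eq]
    refine mem_closure_of_tendsto_of_mem_cthickening (hlim _)
      (hε.comp (hφ.comp hψ).tendsto_atTop) (Eventually.of_forall fun k => ?_)
    simpa [hn₀] using hgS (φ (ψ k))
  · refine mem_invPart hτN fun j _ => hτ j ?_
    filter_upwards [(tendsto_natCast_atTop_atTop.comp hn).eventually_ge_atTop (-j)] with k hk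
    exact hg (φ k) j (by simp only [Function.comp] at hk; simp only [mem_Ici]; omega)

theorem exists_forwardOrbit_inter_invPlus_subset (hF : IsClosed {p : X × X | p.2 ∈ F p.1})
    (hN : IsCompact N) {U : Set X} (hU : IsOpen U) (hSU : InvPart F N ⊆ U) :
    ∃ ε > 0, ∀ A ⊆ N, A ⊆ cthickening ε (InvPart F N) →
      forwardOrbit F N A ∩ InvPlus F N ⊆ U := by
  by_contra! h
  have hbad : ∀ k : ℕ, ∃ g : ℤ → X, ∃ n : ℕ, (∀ j, g j ∈ N) ∧
      g (-n) ∈ cthickening (1 / ((k : ℝ) + 1)) (InvPart F N) ∧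
      IsSolutionOn F g (Ici (-n)) ∧ g 0 ∉ U := by
    intro k
    obtain ⟨A, hAN, hAS, hAU⟩ := h (1 / ((k : ℝ) + 1)) (by positivity)
    obtain ⟨y, ⟨hyA, ρ, hρN, hρ0, hρ⟩, hyU⟩ := not_subset.1 hAU
    obtain ⟨n, hn⟩ := mem_iUnion.1 hyA
    obtain ⟨σ, hσN, hσA, hσy, hσ⟩ := (mem_iterate_stepIn_iff hAN).1 hn
    have hσρ : σ 0 = ρ 0 := hσy.trans hρ0.symm
    refine ⟨splice σ ρ 0, n, splice_mem (fun j _ => hσN j) hρN, ?_,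
      (hσ.mono fun j hj => ⟨hj.1, hj.2⟩).splice (hρ.mono inter_subset_right) hσρ, ?_⟩
    · rw [splice_of_le (by omega)]
      exact hAS hσA
    · rwa [splice_of_ge hσρ le_rfl, hρ0]
  choose g n hgN hgS hg hgU using hbad
  obtain ⟨y, -, φ, hφ, hy⟩ := hN.tendsto_subseq fun k => hgN k 0
  have hyS := mem_invPart_of_tendsto hF hN
    (tendsto_one_div_add_atTop_nhds_zero_nat.comp hφ.tendsto_atTop)
    (fun k => hgN (φ k)) (fun k => hgS (φ k)) (fun k => hg (φ k)) hy
  exact hU.isClosed_compl.mem_of_tendsto hy (Eventually.of_forall fun k => hgU (φ k)) (hSU hyS)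

theorem exists_iterate_stepIn_eq_empty (hF : IsClosed {p : X × X | p.2 ∈ F p.1})
    (hN : IsCompact N) {E : Set X} (hE : IsClosed E) (hEN : E ⊆ N)
    (hEplus : Disjoint E (InvPlus F N)) : ∃ M : ℕ, ∀ m ≥ M, (stepIn F N)^[m] E = ∅ := by
  by_contra! h
  choose m hm x hx using h
  choose σ hσN hσE _ hσ using fun M => (mem_iterate_stepIn_iff hEN).1 (hx M)
  obtain ⟨τ, φ, -, hτN, hlim, hτ⟩ := exists_subseq_tendsto_solution hF hN
    (σ := fun M j => σ M (j + -m M)) fun _ _ => hσN _ _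
  have hτsol : IsSolutionOn F τ (Ici 0) := fun j hj => hτ j (by
    filter_upwards [eventually_gt_atTop j.toNat] with M hM
    have hj' := mem_Ici.1 hj
    have hmM := hm M
    exact (hσ M).comp_add_right _ j
      (show j + -(m M : ℤ) ∈ Ico (-(m M : ℤ)) 0 from ⟨by omega, by omega⟩))
  refine hEplus.ne_of_mem (hE.mem_of_tendsto (hlim 0) (Eventually.of_forall fun k => ?_))
    ⟨τ, fun j _ => hτN j, rfl, hτsol⟩ rfl
  simpa using hσE (φ k)

theorem isCompact_forwardOrbit (hF : IsClosed {p : X × X | p.2 ∈ F p.1}) (hN : IsCompact N)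
    {E : Set X} (hE : IsClosed E) (hEN : E ⊆ N) (hEplus : Disjoint E (InvPlus F N)) :
    IsCompact (forwardOrbit F N E) := by
  obtain ⟨M, hM⟩ := exists_iterate_stepIn_eq_empty hF hN hE hEN hEplus
  have hfin : forwardOrbit F N E = ⋃ m ∈ Iio M, (stepIn F N)^[m] E := by
    refine (iUnion_subset fun m => ?_).antisymm
      (iUnion₂_subset fun m _ => subset_iUnion (fun i => (stepIn F N)^[i] E) m)
    rcases lt_or_ge m M with h | h
    · exact subset_biUnion_of_mem (u := fun m => (stepIn F N)^[m] E) h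
    · simp [hM m h]
  rw [hfin]
  exact (finite_Iio M).isCompact_biUnion fun m _ =>
    hN.of_isClosed_subset (isClosed_iterate_stepIn hF hN hE hEN m) (iterate_stepIn_subset hEN m)

end Compactness

theorem isWeakIndexPair_forwardOrbit {X : Type*} [MetricSpace X] {F : X → Set X} {N : Set X}
    (hF : IsClosed {p : X × X | p.2 ∈ F p.1}) (hN : IsCompact N) {U A : Set X}
    (hU : IsOpen U) (hUN : U ⊆ interior N) (hA : IsClosed A) (hAU : A ⊆ U)
    (hSA : InvPart F N ⊆ interior A) (hAplus : forwardOrbit F N A ∩ InvPlus F N ⊆ U) :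
    IsWeakIndexPair F N (forwardOrbit F N A) (forwardOrbit F N (forwardOrbit F N A \ U)) ∧
      forwardOrbit F N A \ forwardOrbit F N (forwardOrbit F N A \ U) ⊆ U := by
  set Γ := forwardOrbit F N A
  set E := Γ \ U
  have hAN : A ⊆ N := hAU.trans (hUN.trans interior_subset)
  have hΓN : Γ ⊆ N := forwardOrbit_subset hAN
  have hΓ : IsClosed Γ := isClosed_forwardOrbit hF hN hA hAN hSA
  have hEN : E ⊆ N := sdiff_subset.trans hΓN
  have hEplus : Disjoint E (InvPlus F N) :=
    disjoint_left.2 fun x hxE hx => hxE.2 (hAplus ⟨hxE.1, hx⟩)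
  have hP₂ : IsCompact (forwardOrbit F N E) := isCompact_forwardOrbit hF hN (hΓ.sdiff hU) hEN hEplus
  have hdiff : Γ \ forwardOrbit F N E ⊆ U := fun x ⟨hxΓ, hx⟩ =>
    by_contra fun hxU => hx (subset_forwardOrbit ⟨hxΓ, hxU⟩)
  refine ⟨⟨hN.of_isClosed_subset hΓ hΓN, hP₂,
    forwardOrbit_subset_of_mvImage_inter_subset sdiff_subset mvImage_forwardOrbit_inter_subset,
    hΓN, mvImage_forwardOrbit_inter_subset, mvImage_forwardOrbit_inter_subset, ?_, ?_,
    hdiff.trans hUN⟩, hdiff⟩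
  · exact (fBoundary_subset_of_mvImage_inter_subset hΓ mvImage_forwardOrbit_inter_subset).trans
      fun x hx => subset_forwardOrbit ⟨hx.1, fun hxU => hx.2 (hUN hxU)⟩
  · exact fun x hx => interior_maximal
      (sdiff_subset_sdiff_left (interior_subset.trans subset_forwardOrbit))
      (isOpen_interior.sdiff hP₂.isClosed)
      ⟨hSA hx, (disjoint_invPart_forwardOrbit hEN hEplus).notMem_of_mem_left hx⟩

theorem exists_weakIndexPair_general {X : Type*} [MetricSpace X]
    (F : X → Set X) (hF : IsUSC F) (hFc : ∀ x, IsCompact (F x))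
    (N : Set X) (hN : IsCompact N) (hiso : InvPart F N ⊆ interior N)
    (W : Set X) (hW : InvPart F N ⊆ interior W) :
    ∃ P₁ P₂ : Set X, IsWeakIndexPair F N P₁ P₂ ∧ P₁ \ P₂ ⊆ W := by
  have hgraph := hF.isClosed_graph hFc
  set S := InvPart F N
  set U := interior N ∩ interior W
  have hU : IsOpen U := isOpen_interior.inter isOpen_interior
  have hSU : S ⊆ U := subset_inter hiso hW
  obtain ⟨δ, hδ, hδU⟩ := (isCompact_invPart hgraph hN).exists_cthickening_subset_open hU hSU
  obtain ⟨ε, hε, hεU⟩ := exists_forwardOrbit_inter_invPlus_subset hgraph hN hU hSU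
  set A := cthickening (min δ ε) S
  have hAU : A ⊆ U := (cthickening_mono (min_le_left δ ε) S).trans hδU
  have hSA : S ⊆ interior A :=
    (self_subset_thickening (lt_min hδ hε) S).trans (thickening_subset_interior_cthickening _ S)
  have hAplus := hεU A (hAU.trans (inter_subset_left.trans interior_subset))
    (cthickening_mono (min_le_right δ ε) S)
  obtain ⟨hP, hPU⟩ := isWeakIndexPair_forwardOrbit hgraph hN hU inter_subset_left
    isClosed_cthickening hAU hSA hAplus
  exact ⟨_, _, hP, hPU.trans (inter_subset_right.trans interior_subset)⟩

/-- Theorem (existence of weak index pairs): if `N` is an isolating neighbourhood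
for an usc multivalued map `F` with compact values, then every neighbourhood `W`
of `Inv N` contains the difference `P₁ \ P₂` of some weak index pair `P` in `N`. -/
theorem exists_weakIndexPair {X : Type*} [MetricSpace X] [LocallyCompactSpace X]
    (F : X → Set X) (hF : IsUSC F) (hFc : ∀ x, IsCompact (F x))
    (N : Set X) (hN : IsCompact N) (hiso : InvPart F N ⊆ interior N)
    (W : Set X) (hW : InvPart F N ⊆ interior W) :
    ∃ P₁ P₂ : Set X, IsWeakIndexPair F N P₁ P₂ ∧ P₁ \ P₂ ⊆ W :=
  exists_weakIndexPair_general F hF hFc N hN hiso W hW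
end

section
/- With notation as in the context, set S := Inv N, S̄ := ι(S) and N̄ := ι((P₁ ∪ (X \ int N)) ∩ N) ⊆ X̄. Then N̄ is a compact subset of X̄, Inv_{F̄} N̄ = S̄ (the invariant part of N̄ with respect to F̄), and S̄ ⊆ int_{X̄} N̄; in particular N̄ is an isolating neighbourhood for F̄ in X̄ and S̄ is an isolated invariant set for F̄. -/
open Set Topology

/-- The function `μ(x,t) = t + (1-t)α(x)`. -/
def muBar {X : Type*} (α : X → ℝ) (p : X × ℝ) : ℝ :=
  p.2 + (1 - p.2) * α p.1

/-- The multivalued map `F̄(x,t) := F(x) × {μ(x,t)}` (defined on `X × ℝ`). -/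
def FBar {X : Type*} (F : X → Set X) (α : X → ℝ) (p : X × ℝ) : Set (X × ℝ) :=
  F p.1 ×ˢ {muBar α p}

/-- The space `X̄ = (P₁\P₂)×{0} ∪ (P₂ ∪ (X \ int N))×[0,1] ∪ X×{1}`,
as a subset of `X × ℝ`. -/
def XBarSet {X : Type*} [TopologicalSpace X] (N P₁ P₂ : Set X) : Set (X × ℝ) :=
  (P₁ \ P₂) ×ˢ {(0 : ℝ)} ∪ (P₂ ∪ (interior N)ᶜ) ×ˢ Icc (0 : ℝ) 1 ∪
    univ ×ˢ {(1 : ℝ)}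

/-- The map `F̄` viewed as a multivalued map of the subspace `X̄` into itself. -/
def FBarSub {X : Type*} [TopologicalSpace X] (F : X → Set X) (α : X → ℝ)
    (N P₁ P₂ : Set X) (q : XBarSet N P₁ P₂) : Set (XBarSet N P₁ P₂) :=
  {r | (r : X × ℝ) ∈ FBar F α (q : X × ℝ)}

/-- The image of a set under the embedding `ι : x ↦ (x,0)`. -/
def iotaImg {X : Type*} (A : Set X) : Set (X × ℝ) :=
  (fun x => (x, (0 : ℝ))) '' A

/-- With `S := Inv N`, `S̄ := ι(S)` and `N̄ := ι((P₁ ∪ (X \ int N)) ∩ N)`, the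
set `N̄` is a compact subset of `X̄` with `Inv_{F̄} N̄ = S̄` and
`S̄ ⊆ int_{X̄} N̄`; in particular `N̄` is an isolating neighbourhood for `F̄`
and `S̄` is an isolated invariant set for `F̄`. -/
theorem nBar_isolating_nbhd_of_sBar {X : Type*} [TopologicalSpace X]
    [T1Space X] [NormalSpace X] [LocallyCompactSpace X]
    (F : X → Set X) (hF : IsUSC F) (hFc : ∀ x, IsCompact (F x))
    (N : Set X) (hN : IsCompact N) (hiso : InvPart F N ⊆ interior N)
    (P₁ P₂ : Set X) (hP : IsWeakIndexPair F N P₁ P₂)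
    (C D : Set X) (hC : IsCompact C) (hD : IsCompact D) (hCD : Disjoint C D)
    (hCsub : C ⊆ P₁ ∪ (interior N)ᶜ) (hDsub : D ⊆ P₁ ∪ (interior N)ᶜ)
    (hclC : closure (P₁ \ P₂) ⊆ C) (hDcompl : (interior N)ᶜ ⊆ D)
    (α : X → ℝ) (hα : Continuous α) (hα01 : ∀ x, α x ∈ Icc (0 : ℝ) 1)
    (hαC : ∀ x ∈ C, α x = 0) (hαD : ∀ x ∈ D, α x = 1) :
    IsCompact (Subtype.val ⁻¹' iotaImg ((P₁ ∪ (interior N)ᶜ) ∩ N) :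
      Set (XBarSet N P₁ P₂)) ∧
    InvPart (FBarSub F α N P₁ P₂)
        (Subtype.val ⁻¹' iotaImg ((P₁ ∪ (interior N)ᶜ) ∩ N)) =
      Subtype.val ⁻¹' iotaImg (InvPart F N) ∧
    (Subtype.val ⁻¹' iotaImg (InvPart F N) : Set (XBarSet N P₁ P₂)) ⊆
      interior (Subtype.val ⁻¹' iotaImg ((P₁ ∪ (interior N)ᶜ) ∩ N)) := by
  classical
  have hP₁N : P₁ ⊆ N := hP.subset₁N
  set A : Set X := (P₁ ∪ (interior N)ᶜ) ∩ N with hA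
  have hAN : A ⊆ N := inter_subset_right
  have hAeq : A = P₁ ∪ (N ∩ (interior N)ᶜ) := by
    ext x; constructor
    · rintro ⟨h1 | h1, h2⟩
      · exact Or.inl h1
      · exact Or.inr ⟨h2, h1⟩
    · rintro (h | ⟨h1, h2⟩)
      · exact ⟨Or.inl h, hP₁N h⟩
      · exact ⟨Or.inr h2, h1⟩
  have hAcomp : IsCompact A := by
    rw [hAeq]
    exact hP.compact₁.union (hN.inter_right isOpen_interior.isClosed_compl)
  have hιcont : Continuous (fun x : X => (x, (0:ℝ))) :=
    continuous_id.prodMk continuous_const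
  have hKcomp : IsCompact (iotaImg A) := hAcomp.image hιcont
  have hsubXbar : iotaImg A ⊆ XBarSet N P₁ P₂ := by
    rintro p ⟨x, hx, rfl⟩
    rcases hx.1 with hx1 | hx1
    · by_cases hx2 : x ∈ P₂
      · exact Or.inl (Or.inr ⟨Or.inl hx2, le_refl (0:ℝ), zero_le_one⟩)
      · exact Or.inl (Or.inl ⟨⟨hx1, hx2⟩, rfl⟩)
    · exact Or.inl (Or.inr ⟨Or.inr hx1, le_refl (0:ℝ), zero_le_one⟩)
  -- shift lemma
  have hshift : ∀ (σ : ℤ → X), (∀ n, σ n ∈ N) → (∀ n, σ (n+1) ∈ F (σ n)) →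
      ∀ n, σ n ∈ InvPart F N := by
    intro σ h1 h2 n
    refine ⟨fun m => σ (m + n), fun m => h1 (m+n), by simp, fun m => ?_⟩
    show σ (m + 1 + n) ∈ F (σ (m + n))
    rw [add_right_comm]; exact h2 (m+n)
  have hSsub : InvPart F N ⊆ P₁ \ P₂ := fun x hx => interior_subset (hP.inv_subset hx)
  refine ⟨?_, ?_, ?_⟩
  · -- compactness
    rw [hA] at hsubXbar ⊢
    exact (Topology.IsInducing.subtypeVal.isCompact_preimage_iff
      (by rwa [Subtype.range_coe])).mpr hKcomp
  · -- Inv = S̄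
    ext q; constructor
    · rintro ⟨σ, hmem, h0, hstep⟩
      have hx2 : ∀ n, ((σ n : X × ℝ)).2 = 0 ∧ ((σ n : X × ℝ)).1 ∈ A := by
        intro n
        obtain ⟨a, ha, hae⟩ := hmem n
        constructor
        · rw [← hae]
        · rw [← hae]; exact ha
      subst h0
      exact ⟨(σ 0 : X × ℝ).1,
        ⟨fun n => (σ n : X × ℝ).1, fun n => hAN (hx2 n).2, rfl,
          fun n => (hstep n).1⟩,
        Prod.ext rfl ((hx2 0).1).symm⟩
    · rintro ⟨x, hxS, hxq⟩
      obtain ⟨σ, hσN, hσ0, hσF⟩ := hxS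
      have hmemPP : ∀ n, σ n ∈ P₁ \ P₂ := fun n => hSsub (hshift σ hσN hσF n)
      have hXbar : ∀ n, ((σ n, (0:ℝ)) : X × ℝ) ∈ XBarSet N P₁ P₂ :=
        fun n => Or.inl (Or.inl ⟨hmemPP n, rfl⟩)
      refine ⟨fun n => ⟨(σ n, 0), hXbar n⟩, ?_, ?_, ?_⟩
      · exact fun n => ⟨σ n, ⟨Or.inl (hmemPP n).1, hσN n⟩, rfl⟩
      · apply Subtype.ext
        show ((σ 0, (0:ℝ)) : X × ℝ) = (q : X × ℝ)
        rw [hσ0]; exact hxq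
      · intro n
        refine ⟨hσF n, ?_⟩
        show (0:ℝ) ∈ ({muBar α (σ n, 0)} : Set ℝ)
        have hα0 : α (σ n) = 0 := hαC _ (hclC (subset_closure (hmemPP n)))
        simp [muBar, hα0]
  · -- interior
    intro q hq
    obtain ⟨x, hxS, hxq⟩ := hq
    have hU : IsOpen (Subtype.val ⁻¹' (interior (P₁ \ P₂) ×ˢ Iio (1:ℝ)) :
        Set (XBarSet N P₁ P₂)) :=
      (isOpen_interior.prod isOpen_Iio).preimage continuous_subtype_val
    have hsub : (Subtype.val ⁻¹' (interior (P₁ \ P₂) ×ˢ Iio (1:ℝ)) :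
        Set (XBarSet N P₁ P₂)) ⊆ Subtype.val ⁻¹' iotaImg A := by
      rintro r hr
      rcases r.2 with (h | h) | h
      · exact ⟨(r : X × ℝ).1, ⟨Or.inl h.1.1, hP₁N h.1.1⟩, Prod.ext rfl h.2.symm⟩
      · exfalso
        rcases h.1 with h1 | h1
        · exact (interior_subset hr.1).2 h1
        · exact h1 (hP.diff_subset (interior_subset hr.1))
      · exact absurd h.2 (ne_of_lt hr.2)
    refine interior_maximal hsub hU ?_
    show (q : X × ℝ) ∈ interior (P₁ \ P₂) ×ˢ Iio (1:ℝ)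
    rw [← hxq]
    refine ⟨hP.inv_subset hxS, ?_⟩
    show (0:ℝ) < 1
    exact zero_lt_one
end

section
/- With notation as in the context, set S := Inv N, S̄ := ι(S), and M := (P₁\P₂)×{0} ∪ (P₂ ∪ (X \ int N))×[0,1/2] ⊆ X̄. Then Inv_{F̄} M = S̄, S̄ ⊆ int_{X̄} M, and F̄(S̄) ⊆ int_{X̄} M; in particular M isolates S̄ in the strong sense of Szymczak: Inv_{F̄} M ∪ F̄(Inv_{F̄} M) ⊆ int_{X̄} M. -/
open Set Topology

/-- The function `μ(x,t) = t + (1-t)α(x)`. -/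

lemma shift_invpart {Y : Type*} (G : Y → Set Y) (A : Set Y) (σ : ℤ → Y)
    (h1 : ∀ n : ℤ, σ n ∈ A) (h2 : ∀ n : ℤ, σ (n + 1) ∈ G (σ n)) (m : ℤ) :
    σ m ∈ InvPart G A := by
  refine ⟨fun k => σ (k + m), fun k => h1 _, by simp, fun k => ?_⟩
  show σ (k + 1 + m) ∈ G (σ (k + m))
  have h := h2 (k + m)
  rwa [show k + 1 + m = k + m + 1 by ring]

/-- With `S̄ := ι(Inv N)` and
`M := (P₁\P₂)×{0} ∪ (P₂ ∪ (X \ int N))×[0,1/2] ⊆ X̄`, one has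
`Inv_{F̄} M = S̄`, `S̄ ⊆ int_{X̄} M` and `F̄(S̄) ⊆ int_{X̄} M`; in particular
`Inv_{F̄} M ∪ F̄(Inv_{F̄} M) ⊆ int_{X̄} M`, i.e. `M` isolates `S̄` in the strong
sense of Szymczak. -/
theorem sBar_strongly_isolated {X : Type*} [TopologicalSpace X]
    [T1Space X] [NormalSpace X] [LocallyCompactSpace X]
    (F : X → Set X) (hF : IsUSC F) (hFc : ∀ x, IsCompact (F x))
    (N : Set X) (hN : IsCompact N) (hiso : InvPart F N ⊆ interior N)
    (P₁ P₂ : Set X) (hP : IsWeakIndexPair F N P₁ P₂)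
    (C D : Set X) (hC : IsCompact C) (hD : IsCompact D) (hCD : Disjoint C D)
    (hCsub : C ⊆ P₁ ∪ (interior N)ᶜ) (hDsub : D ⊆ P₁ ∪ (interior N)ᶜ)
    (hclC : closure (P₁ \ P₂) ⊆ C) (hDcompl : (interior N)ᶜ ⊆ D)
    (α : X → ℝ) (hα : Continuous α) (hα01 : ∀ x, α x ∈ Icc (0 : ℝ) 1)
    (hαC : ∀ x ∈ C, α x = 0) (hαD : ∀ x ∈ D, α x = 1) :
    InvPart (FBarSub F α N P₁ P₂)
        (Subtype.val ⁻¹' ((P₁ \ P₂) ×ˢ {(0 : ℝ)} ∪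
          (P₂ ∪ (interior N)ᶜ) ×ˢ Icc (0 : ℝ) (1 / 2))) =
      Subtype.val ⁻¹' iotaImg (InvPart F N) ∧
    (Subtype.val ⁻¹' iotaImg (InvPart F N) : Set (XBarSet N P₁ P₂)) ⊆
      interior (Subtype.val ⁻¹' ((P₁ \ P₂) ×ˢ {(0 : ℝ)} ∪
        (P₂ ∪ (interior N)ᶜ) ×ˢ Icc (0 : ℝ) (1 / 2))) ∧
    MVImage (FBarSub F α N P₁ P₂) (Subtype.val ⁻¹' iotaImg (InvPart F N)) ⊆
      interior (Subtype.val ⁻¹' ((P₁ \ P₂) ×ˢ {(0 : ℝ)} ∪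
        (P₂ ∪ (interior N)ᶜ) ×ˢ Icc (0 : ℝ) (1 / 2))) ∧
    InvPart (FBarSub F α N P₁ P₂)
        (Subtype.val ⁻¹' ((P₁ \ P₂) ×ˢ {(0 : ℝ)} ∪
          (P₂ ∪ (interior N)ᶜ) ×ˢ Icc (0 : ℝ) (1 / 2))) ∪
      MVImage (FBarSub F α N P₁ P₂)
        (InvPart (FBarSub F α N P₁ P₂)
          (Subtype.val ⁻¹' ((P₁ \ P₂) ×ˢ {(0 : ℝ)} ∪
            (P₂ ∪ (interior N)ᶜ) ×ˢ Icc (0 : ℝ) (1 / 2)))) ⊆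
      interior (Subtype.val ⁻¹' ((P₁ \ P₂) ×ˢ {(0 : ℝ)} ∪
        (P₂ ∪ (interior N)ᶜ) ×ˢ Icc (0 : ℝ) (1 / 2))) := by
  classical
  set M' : Set (X × ℝ) := (P₁ \ P₂) ×ˢ {(0 : ℝ)} ∪
      (P₂ ∪ (interior N)ᶜ) ×ˢ Icc (0 : ℝ) (1 / 2) with hM'def
  have hSP : InvPart F N ⊆ P₁ \ P₂ := hP.inv_subset.trans interior_subset
  have hαS : ∀ x ∈ P₁ \ P₂, α x = 0 := fun x hx => hαC x (hclC (subset_closure hx))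
  -- the open set {t < 1/2} in X̄ is contained in M
  have hOopen : IsOpen {q : XBarSet N P₁ P₂ | (q : X × ℝ).2 < 1 / 2} := by
    have hc : Continuous fun q : XBarSet N P₁ P₂ => (q : X × ℝ).2 :=
      continuous_snd.comp continuous_subtype_val
    exact isOpen_Iio.preimage hc
  have hOM : {q : XBarSet N P₁ P₂ | (q : X × ℝ).2 < 1 / 2} ⊆ Subtype.val ⁻¹' M' := by
    rintro ⟨⟨y, t⟩, hq⟩ hlt
    simp only [mem_setOf_eq] at hlt
    rcases hq with (⟨hy, ht⟩ | ⟨hy, ht⟩) | ht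
    · exact Or.inl ⟨hy, ht⟩
    · exact Or.inr ⟨hy, ht.1, le_of_lt hlt⟩
    · simp only [mem_prod, mem_singleton_iff] at ht
      rw [ht.2] at hlt; norm_num at hlt
  have hOint : {q : XBarSet N P₁ P₂ | (q : X × ℝ).2 < 1 / 2} ⊆
      interior (Subtype.val ⁻¹' M') := interior_maximal hOM hOopen
  -- Part 1: Inv_{F̄} M = S̄
  have h1 : InvPart (FBarSub F α N P₁ P₂) (Subtype.val ⁻¹' M') =
      Subtype.val ⁻¹' iotaImg (InvPart F N) := by
    apply Set.eq_of_subset_of_subset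
    · rintro q ⟨σ, hσM, hσ0, hσF⟩
      set x : ℤ → X := fun n => ((σ n : X × ℝ)).1 with hxdef
      set t : ℤ → ℝ := fun n => ((σ n : X × ℝ)).2 with htdef
      have ht01 : ∀ n : ℤ, 0 ≤ t n ∧ t n ≤ 1 / 2 := by
        intro n
        rcases hσM n with ⟨_, ht⟩ | ⟨_, ht⟩
        · simp only [mem_singleton_iff] at ht
          rw [show t n = ((σ n : X × ℝ)).2 from rfl, ht]; norm_num
        · exact ⟨ht.1, ht.2⟩
      have htsucc : ∀ n : ℤ, t (n + 1) = t n + (1 - t n) * α (x n) := by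
        intro n
        have h := (hσF n).2
        simp only [mem_singleton_iff] at h
        exact h
      have hxF : ∀ n : ℤ, x (n + 1) ∈ F (x n) := fun n => (hσF n).1
      have hxP₁ : ∀ n : ℤ, x n ∈ P₁ := by
        intro n
        rcases hσM n with ⟨hx, _⟩ | ⟨hx, _⟩
        · exact hx.1
        · rcases hx with hx | hx
          · exact hP.subset₂₁ hx
          · exfalso
            have hα1 : α (x n) = 1 := hαD _ (hDcompl hx)
            have h := htsucc n
            rw [hα1] at h
            have h2 := (ht01 (n + 1)).2
            have h3 := (ht01 n).1
            rw [h] at h2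
            linarith
      have hxS : ∀ n : ℤ, x n ∈ InvPart F N :=
        fun n => shift_invpart F N x (fun k => hP.subset₁N (hxP₁ k)) hxF n
      have ht0 : ∀ n : ℤ, t n = 0 := by
        intro n
        have hxd : x n ∈ P₁ \ P₂ := hSP (hxS n)
        have hxi : x n ∈ interior N := hP.diff_subset hxd
        rcases hσM n with ⟨_, ht⟩ | ⟨hx, _⟩
        · exact ht
        · rcases hx with hx | hx
          · exact absurd hx hxd.2
          · exact absurd hxi hx
      refine ⟨x 0, hxS 0, ?_⟩
      have : (σ 0 : X × ℝ) = (x 0, (0 : ℝ)) := Prod.ext rfl (ht0 0)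
      rw [hσ0] at this
      exact this.symm
    · rintro q ⟨x, hxS, hxq⟩
      obtain ⟨σ, hσN, hσ0, hσF⟩ := hxS
      have hσS : ∀ n : ℤ, σ n ∈ InvPart F N := fun n => shift_invpart F N σ hσN hσF n
      have hmem : ∀ n : ℤ, σ n ∈ P₁ \ P₂ := fun n => hSP (hσS n)
      have hα0 : ∀ n : ℤ, α (σ n) = 0 := fun n => hαS _ (hmem n)
      refine ⟨fun n => ⟨(σ n, (0 : ℝ)), Or.inl (Or.inl ⟨hmem n, rfl⟩)⟩,
        fun n => Or.inl ⟨hmem n, rfl⟩, ?_, fun n => ?_⟩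
      · apply Subtype.ext
        show (σ 0, (0 : ℝ)) = (q : X × ℝ)
        rw [hσ0]; exact hxq
      · refine ⟨hσF n, ?_⟩
        show (0 : ℝ) ∈ {muBar α (σ n, (0 : ℝ))}
        simp [muBar, hα0 n]
  -- Part 2: S̄ ⊆ int M
  have h2 : (Subtype.val ⁻¹' iotaImg (InvPart F N) : Set (XBarSet N P₁ P₂)) ⊆
      interior (Subtype.val ⁻¹' M') := by
    rintro q ⟨x, _, hxq⟩
    apply hOint
    show (q : X × ℝ).2 < 1 / 2
    rw [← hxq]; norm_num
  -- Part 3: F̄(S̄) ⊆ int M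
  have h3 : MVImage (FBarSub F α N P₁ P₂) (Subtype.val ⁻¹' iotaImg (InvPart F N)) ⊆
      interior (Subtype.val ⁻¹' M') := by
    intro r hr
    simp only [MVImage, mem_iUnion] at hr
    obtain ⟨q, hq, hrq⟩ := hr
    obtain ⟨x, hxS, hxq⟩ := hq
    apply hOint
    show (r : X × ℝ).2 < 1 / 2
    have h := hrq.2
    simp only [mem_singleton_iff] at h
    have hμ : muBar α (q : X × ℝ) = 0 := by
      rw [← hxq]
      simp [muBar, hαS x (hSP hxS)]
    rw [h, hμ]; norm_num
  exact ⟨h1, h2, h3, by rw [h1]; exact union_subset h2 h3⟩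
end

section
/- Let X be a topological space, F : X → 𝒫(X) an upper semicontinuous multivalued map with compact values, N ⊆ X compact, and P = (P₁,P₂) a weak index pair in N. Then bd_F(P₁) ⊆ bd N. -/
open Set Topology

/-- If `P` is a weak index pair in `N` then `bd_F(P₁) ⊆ bd N`. -/
theorem fBoundary_subset_frontier {X : Type*} [TopologicalSpace X]
    (F : X → Set X) (hF : IsUSC F) (hFc : ∀ x, IsCompact (F x))
    (N : Set X) (hN : IsCompact N)
    (P₁ P₂ : Set X) (hP : IsWeakIndexPair F N P₁ P₂) :
    FBoundary F P₁ ⊆ frontier N := by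
  intro x hx
  obtain ⟨hx1, hx2⟩ := hx
  constructor
  · exact closure_mono hP.subset₁N hx1
  · have hsub : MVImage F P₁ \ P₁ ⊆ Nᶜ := by
      intro y hy hyN
      exact hy.2 (hP.mapsInto₁ ⟨hy.1, hyN⟩)
    have := closure_mono hsub hx2
    rwa [closure_compl] at this
end

section
/- Let X be a metric space, F : X → 𝒫(X) an upper semicontinuous multivalued map with compact values, N an isolating neighbourhood for F with S := Inv N, and P = (P₁,P₂) a weak index pair in N. If M ⊆ N is an isolating neighbourhood for F with Inv M = S and P₁ \ P₂ ⊆ int M, then Q := (P₁ ∩ M, P₂ ∩ M) is a weak index pair in M. -/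
open Set Topology

/-- If `N` is an isolating neighbourhood of `S := Inv N`, `P` is a weak index
pair in `N`, and `M ⊆ N` is an isolating neighbourhood for `S` with
`P₁ \ P₂ ⊆ int M`, then `Q := P ∩ M` is a weak index pair in `M`. -/
theorem weakIndexPair_inter_isolatingNbhd {X : Type*} [MetricSpace X]
    (F : X → Set X) (hF : IsUSC F) (hFc : ∀ x, IsCompact (F x))
    (N : Set X) (hN : IsCompact N) (hiso : InvPart F N ⊆ interior N)
    (P₁ P₂ : Set X) (hP : IsWeakIndexPair F N P₁ P₂)
    (M : Set X) (hMN : M ⊆ N) (hM : IsCompact M)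
    (hMiso : InvPart F M ⊆ interior M) (hInvM : InvPart F M = InvPart F N)
    (hPM : P₁ \ P₂ ⊆ interior M) :
    IsWeakIndexPair F M (P₁ ∩ M) (P₂ ∩ M) := by
  have hQ1c : IsCompact (P₁ ∩ M) := hP.compact₁.inter_right hM.isClosed
  have hQ2c : IsCompact (P₂ ∩ M) := hP.compact₂.inter_right hM.isClosed
  have hdiff : (P₁ ∩ M) \ (P₂ ∩ M) = (P₁ \ P₂) ∩ M := by
    ext x
    constructor
    · rintro ⟨⟨h1, hm⟩, h2⟩
      exact ⟨⟨h1, fun h => h2 ⟨h, hm⟩⟩, hm⟩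
    · rintro ⟨⟨h1, h2⟩, hm⟩
      exact ⟨⟨h1, hm⟩, fun h => h2 h.1⟩
  refine ⟨hQ1c, hQ2c, inter_subset_inter_left _ hP.subset₂₁, inter_subset_right,
    ?_, ?_, ?_, ?_, ?_⟩
  · rintro y ⟨hy, hyM⟩
    simp only [MVImage, mem_iUnion, exists_prop] at hy
    obtain ⟨x, ⟨hx1, hxM⟩, hyx⟩ := hy
    exact ⟨hP.mapsInto₁ ⟨mem_iUnion₂.mpr ⟨x, hx1, hyx⟩, hMN hyM⟩, hyM⟩
  · rintro y ⟨hy, hyM⟩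
    simp only [MVImage, mem_iUnion, exists_prop] at hy
    obtain ⟨x, ⟨hx1, hxM⟩, hyx⟩ := hy
    exact ⟨hP.mapsInto₂ ⟨mem_iUnion₂.mpr ⟨x, hx1, hyx⟩, hMN hyM⟩, hyM⟩
  · rintro z ⟨hz1, hz2⟩
    have hzQ : z ∈ P₁ ∩ M := hQ1c.isClosed.closure_subset hz1
    by_contra hzn
    have hzP2 : z ∉ P₂ := fun h => hzn ⟨h, hzQ.2⟩
    have hzint : z ∈ interior M := hPM ⟨hzQ.1, hzP2⟩
    have key : z ∈ closure (interior M ∩ (MVImage F (P₁ ∩ M) \ (P₁ ∩ M))) :=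
      isOpen_interior.inter_closure ⟨hzint, hz2⟩
    have hsub : interior M ∩ (MVImage F (P₁ ∩ M) \ (P₁ ∩ M)) ⊆ MVImage F P₁ \ P₁ := by
      rintro y ⟨hyM, hy1, hy2⟩
      refine ⟨?_, fun h => hy2 ⟨h, interior_subset hyM⟩⟩
      simp only [MVImage, mem_iUnion, exists_prop] at hy1 ⊢
      obtain ⟨x, hx, hxy⟩ := hy1
      exact ⟨x, hx.1, hxy⟩
    have : z ∈ FBoundary F P₁ :=
      ⟨subset_closure hzQ.1, closure_mono hsub key⟩
    exact hzP2 (hP.fBoundary_subset this)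
  · intro x hx
    rw [hdiff, interior_inter]
    exact ⟨hP.inv_subset (hInvM ▸ hx), hMiso hx⟩
  · rw [hdiff]
    exact fun x hx => hPM hx.1
end

section
/- Let X be a metric space, F : X → 𝒫(X) an upper semicontinuous multivalued map with compact values, and N ⊆ X compact. If P = (P₁,P₂) and Q = (Q₁,Q₂) are weak index pairs in N, then P ∩ Q := (P₁ ∩ Q₁, P₂ ∩ Q₂) is a weak index pair in N. -/
open Set Topology

lemma mvImage_mono {Y : Type*} (F : Y → Set Y) {A B : Set Y} (h : A ⊆ B) :
    MVImage F A ⊆ MVImage F B := by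
  intro y hy
  rcases mem_iUnion₂.1 hy with ⟨x, hx, hxy⟩
  exact mem_iUnion₂.2 ⟨x, h hx, hxy⟩

/-- Key lemma: the `F`-boundary of the intersection lands in `P₂`. -/
lemma fBoundary_inter_subset_left {X : Type*} [MetricSpace X]
    (F : X → Set X) (N P₁ P₂ Q₁ Q₂ : Set X)
    (hP : IsWeakIndexPair F N P₁ P₂) (hQ : IsWeakIndexPair F N Q₁ Q₂) :
    FBoundary F (P₁ ∩ Q₁) ⊆ P₂ := by
  intro x hx
  obtain ⟨hx1, hx2⟩ := hx
  have hPc : IsClosed P₁ := hP.compact₁.isClosed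
  have hQc : IsClosed Q₁ := hQ.compact₁.isClosed
  have hxPQ : x ∈ P₁ ∩ Q₁ := by
    have := (hPc.inter hQc).closure_subset hx1
    exact this
  by_contra hxP2
  -- x ∉ closure (MVImage F P₁ \ P₁), else x ∈ FBoundary F P₁ ⊆ P₂
  have hxncl : x ∉ closure (MVImage F P₁ \ P₁) := by
    intro hcl
    exact hxP2 (hP.fBoundary_subset ⟨subset_closure hxPQ.1, hcl⟩)
  have hxintN : x ∈ interior N := hP.diff_subset ⟨hxPQ.1, hxP2⟩
  -- open neighborhood of x
  have hU : IsOpen ((closure (MVImage F P₁ \ P₁))ᶜ ∩ interior N) :=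
    (isClosed_closure.isOpen_compl).inter isOpen_interior
  have hxU : x ∈ (closure (MVImage F P₁ \ P₁))ᶜ ∩ interior N := ⟨hxncl, hxintN⟩
  rcases mem_closure_iff.1 hx2 _ hU hxU with ⟨y, ⟨hy1, hy2⟩, hy3, hy4⟩
  -- y ∈ MVImage F (P₁ ∩ Q₁), y ∉ P₁ ∩ Q₁, y ∉ closure(FP₁\P₁), y ∈ int N
  have hyFP : y ∈ MVImage F P₁ := mvImage_mono F inter_subset_left hy3
  have hyP1 : y ∈ P₁ := by
    by_contra h
    exact hy1 (subset_closure ⟨hyFP, h⟩)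
  have hyN : y ∈ N := interior_subset hy2
  have hyQ1 : y ∈ Q₁ :=
    hQ.mapsInto₁ ⟨mvImage_mono F inter_subset_right hy3, hyN⟩
  exact hy4 ⟨hyP1, hyQ1⟩

/-- The componentwise intersection of two weak index pairs in `N` is a weak
index pair in `N`. -/
theorem weakIndexPair_inter {X : Type*} [MetricSpace X]
    (F : X → Set X) (hF : IsUSC F) (hFc : ∀ x, IsCompact (F x))
    (N : Set X) (hN : IsCompact N)
    (P₁ P₂ Q₁ Q₂ : Set X)
    (hP : IsWeakIndexPair F N P₁ P₂) (hQ : IsWeakIndexPair F N Q₁ Q₂) :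
    IsWeakIndexPair F N (P₁ ∩ Q₁) (P₂ ∩ Q₂) := by
  constructor
  · exact hP.compact₁.inter_right hQ.compact₁.isClosed
  · exact hP.compact₂.inter_right hQ.compact₂.isClosed
  · exact inter_subset_inter hP.subset₂₁ hQ.subset₂₁
  · exact inter_subset_left.trans hP.subset₁N
  · intro y ⟨hy1, hy2⟩
    exact ⟨hP.mapsInto₁ ⟨mvImage_mono F inter_subset_left hy1, hy2⟩,
      hQ.mapsInto₁ ⟨mvImage_mono F inter_subset_right hy1, hy2⟩⟩
  · intro y ⟨hy1, hy2⟩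
    exact ⟨hP.mapsInto₂ ⟨mvImage_mono F inter_subset_left hy1, hy2⟩,
      hQ.mapsInto₂ ⟨mvImage_mono F inter_subset_right hy1, hy2⟩⟩
  · intro x hx
    refine ⟨fBoundary_inter_subset_left F N P₁ P₂ Q₁ Q₂ hP hQ hx, ?_⟩
    have : FBoundary F (Q₁ ∩ P₁) = FBoundary F (P₁ ∩ Q₁) := by
      rw [inter_comm]
    exact fBoundary_inter_subset_left F N Q₁ Q₂ P₁ P₂ hQ hP (this ▸ hx)
  · intro x hx
    have h1 := hP.inv_subset hx
    have h2 := hQ.inv_subset hx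
    have : x ∈ interior ((P₁ \ P₂) ∩ (Q₁ \ Q₂)) := by
      rw [interior_inter]; exact ⟨h1, h2⟩
    refine interior_mono ?_ this
    rintro y ⟨⟨hy1, hy2⟩, ⟨hy3, hy4⟩⟩
    exact ⟨⟨hy1, hy3⟩, fun h => hy2 h.1⟩
  · rintro x ⟨⟨hx1, hx2⟩, hx3⟩
    by_cases h : x ∈ P₂
    · have : x ∉ Q₂ := fun h' => hx3 ⟨h, h'⟩
      exact hQ.diff_subset ⟨hx2, this⟩
    · exact hP.diff_subset ⟨hx1, h⟩
end

section
/- With notation as in the context, F̄ is a well-defined multivalued map of X̄ into itself, i.e. F̄(x,t) = F(x)×{μ(x,t)} ⊆ X̄ for every (x,t) ∈ X̄; moreover F̄ : X̄ → 𝒫(X̄) is upper semicontinuous and each value F̄(x,t) is compact and homeomorphic to F(x). -/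
open Set Topology

lemma muBar_continuous {X : Type*} [TopologicalSpace X] {α : X → ℝ}
    (hα : Continuous α) : Continuous (muBar α) := by
  unfold muBar
  exact continuous_snd.add (((continuous_const.sub continuous_snd)).mul
    (hα.comp continuous_fst))

/-- `F̄` is usc as a multivalued map on the ambient space `X × ℝ`. -/
lemma fBar_usc_ambient {X : Type*} [TopologicalSpace X]
    (F : X → Set X) (α : X → ℝ)
    (hF : IsUSC F) (hFc : ∀ x, IsCompact (F x)) (hα : Continuous α) :
    ∀ B : Set (X × ℝ), IsClosed B →
      IsClosed {p : X × ℝ | (FBar F α p ∩ B).Nonempty} := by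
  intro B hB
  rw [← isOpen_compl_iff]
  rw [isOpen_iff_mem_nhds]
  intro p hp
  have hdisj : F p.1 ×ˢ ({muBar α p} : Set ℝ) ⊆ Bᶜ := by
    intro q hq hqB
    exact hp ⟨q, hq, hqB⟩
  obtain ⟨u, v, hu, hv, hFu, hsv, huv⟩ :=
    generalized_tube_lemma (hFc p.1) isCompact_singleton hB.isOpen_compl hdisj
  have hO : IsOpen {x : X | (F x ∩ uᶜ).Nonempty}ᶜ :=
    (hF uᶜ hu.isClosed_compl).isOpen_compl
  have hW : IsOpen ((Prod.fst ⁻¹' {x : X | (F x ∩ uᶜ).Nonempty}ᶜ) ∩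
      (muBar α ⁻¹' v)) :=
    (hO.preimage continuous_fst).inter (hv.preimage (muBar_continuous hα))
  have hpW : p ∈ (Prod.fst ⁻¹' {x : X | (F x ∩ uᶜ).Nonempty}ᶜ) ∩
      (muBar α ⁻¹' v) := by
    refine ⟨?_, hsv rfl⟩
    intro hne
    obtain ⟨y, hy, hyu⟩ := hne
    exact hyu (hFu hy)
  refine Filter.mem_of_superset (hW.mem_nhds hpW) ?_
  rintro r ⟨hr1, hr2⟩ ⟨q, hq, hqB⟩
  obtain ⟨hq1, hq2⟩ := (Set.mem_prod).mp hq
  have hq1u : q.1 ∈ u := by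
    by_contra h
    exact hr1 ⟨q.1, hq1, h⟩
  have : q ∈ u ×ˢ v := ⟨hq1u, by
    rw [Set.mem_singleton_iff] at hq2
    rw [hq2]; exact hr2⟩
  exact huv this hqB

/-- `F̄` is a well-defined usc multivalued map of `X̄` into itself, with compact
values homeomorphic to the corresponding values of `F`. -/
theorem fBar_welldefined_usc_compact {X : Type*} [TopologicalSpace X]
    [T1Space X] [NormalSpace X] [LocallyCompactSpace X]
    (F : X → Set X) (hF : IsUSC F) (hFc : ∀ x, IsCompact (F x))
    (N : Set X) (hN : IsCompact N) (hiso : InvPart F N ⊆ interior N)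
    (P₁ P₂ : Set X) (hP : IsWeakIndexPair F N P₁ P₂)
    (C D : Set X) (hC : IsCompact C) (hD : IsCompact D) (hCD : Disjoint C D)
    (hCsub : C ⊆ P₁ ∪ (interior N)ᶜ) (hDsub : D ⊆ P₁ ∪ (interior N)ᶜ)
    (hclC : closure (P₁ \ P₂) ⊆ C) (hDcompl : (interior N)ᶜ ⊆ D)
    (α : X → ℝ) (hα : Continuous α) (hα01 : ∀ x, α x ∈ Icc (0 : ℝ) 1)
    (hαC : ∀ x ∈ C, α x = 0) (hαD : ∀ x ∈ D, α x = 1) :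
    (∀ p ∈ XBarSet N P₁ P₂, FBar F α p ⊆ XBarSet N P₁ P₂) ∧
    IsUSC (FBarSub F α N P₁ P₂) ∧
    (∀ q : XBarSet N P₁ P₂,
      IsCompact (FBarSub F α N P₁ P₂ q) ∧
      Nonempty (F (q : X × ℝ).1 ≃ₜ FBarSub F α N P₁ P₂ q)) := by
  -- the second coordinate of any point of `X̄` lies in `[0,1]`
  have hsq : ∀ p ∈ XBarSet N P₁ P₂, p.2 ∈ Icc (0 : ℝ) 1 := by
    rintro ⟨x, t⟩ hp
    rcases hp with (⟨-, ht⟩ | ⟨-, ht⟩) | ⟨-, ht⟩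
    · rw [mem_singleton_iff] at ht; rw [ht]; exact ⟨le_rfl, zero_le_one⟩
    · exact ht
    · rw [mem_singleton_iff] at ht; rw [ht]; exact ⟨zero_le_one, le_rfl⟩
  -- `μ` also takes values in `[0,1]` on `X̄`
  have hmu : ∀ p ∈ XBarSet N P₁ P₂, muBar α p ∈ Icc (0 : ℝ) 1 := by
    intro p hp
    obtain ⟨ht0, ht1⟩ := hsq p hp
    obtain ⟨ha0, ha1⟩ := hα01 p.1
    constructor
    · unfold muBar; nlinarith
    · unfold muBar; nlinarith
  -- well-definedness
  have hwd : ∀ p ∈ XBarSet N P₁ P₂, FBar F α p ⊆ XBarSet N P₁ P₂ := by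
    rintro ⟨x, t⟩ hp ⟨y, s⟩ hq
    obtain ⟨hy, hs⟩ := (Set.mem_prod).mp hq
    rw [mem_singleton_iff] at hs
    have hs' : s = muBar α (x, t) := hs
    have hsIcc : s ∈ Icc (0 : ℝ) 1 := hs' ▸ hmu _ hp
    rcases hp with (⟨hx, ht⟩ | ⟨hx, ht⟩) | ⟨-, ht⟩
    · -- case `x ∈ P₁ \ P₂`, `t = 0`
      rw [mem_singleton_iff] at ht
      have hαx : α x = 0 := hαC x (hclC (subset_closure hx))
      have hs0 : s = 0 := by
        rw [hs']; show t + (1 - t) * α x = 0; rw [hαx, show t = 0 from ht]; ring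
      by_cases hyN : y ∈ interior N
      · have hyP1 : y ∈ P₁ :=
          hP.mapsInto₁ ⟨mem_biUnion hx.1 hy, interior_subset hyN⟩
        by_cases hyP2 : y ∈ P₂
        · exact Or.inl (Or.inr ⟨Or.inl hyP2, hsIcc⟩)
        · exact Or.inl (Or.inl ⟨⟨hyP1, hyP2⟩, hs0⟩)
      · exact Or.inl (Or.inr ⟨Or.inr hyN, hsIcc⟩)
    · -- case `x ∈ P₂ ∪ (int N)ᶜ`, `t ∈ [0,1]`
      rcases hx with hx2 | hxN
      · by_cases hyN : y ∈ interior N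
        · have hyP2 : y ∈ P₂ :=
            hP.mapsInto₂ ⟨mem_biUnion hx2 hy, interior_subset hyN⟩
          exact Or.inl (Or.inr ⟨Or.inl hyP2, hsIcc⟩)
        · exact Or.inl (Or.inr ⟨Or.inr hyN, hsIcc⟩)
      · have hαx : α x = 1 := hαD x (hDcompl hxN)
        have hs1 : s = 1 := by rw [hs']; show t + (1 - t) * α x = 1; rw [hαx]; ring
        exact Or.inr ⟨trivial, hs1⟩
    · -- case `t = 1`
      rw [mem_singleton_iff] at ht
      have hs1 : s = 1 := by rw [hs']; show t + (1 - t) * α x = 1; rw [show t = 1 from ht]; ring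
      exact Or.inr ⟨trivial, hs1⟩
  refine ⟨hwd, ?_, ?_⟩
  · -- upper semicontinuity of the restricted map
    intro B hB
    obtain ⟨B', hB', hBeq⟩ := isClosed_induced_iff.mp hB
    have key := fBar_usc_ambient F α hF hFc hα B' hB'
    have hset : {q : XBarSet N P₁ P₂ | (FBarSub F α N P₁ P₂ q ∩ B).Nonempty} =
        Subtype.val ⁻¹' {p : X × ℝ | (FBar F α p ∩ B').Nonempty} := by
      ext q
      constructor
      · rintro ⟨r, hr, hrB⟩
        have : (r : X × ℝ) ∈ B' := by
          rw [← hBeq] at hrB; exact hrB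
        exact ⟨(r : X × ℝ), hr, this⟩
      · rintro ⟨p, hpF, hpB'⟩
        have hpX : p ∈ XBarSet N P₁ P₂ := hwd _ q.2 hpF
        refine ⟨⟨p, hpX⟩, hpF, ?_⟩
        rw [← hBeq]; exact hpB'
    rw [hset]
    exact key.preimage continuous_subtype_val
  · -- compactness of values and homeomorphism with values of `F`
    intro q
    set x := (q : X × ℝ).1 with hx
    set m := muBar α (q : X × ℝ) with hm
    have hmemF : ∀ y : F x, ((y : X), m) ∈ FBar F α (q : X × ℝ) := by
      intro y
      exact ⟨y.2, rfl⟩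
    -- the forward map into `X̄`
    let f : F x → XBarSet N P₁ P₂ := fun y => ⟨((y : X), m), hwd _ q.2 (hmemF y)⟩
    have hfc : Continuous f :=
      Continuous.subtype_mk (continuous_subtype_val.prodMk continuous_const) _
    have hrange : Set.range f = FBarSub F α N P₁ P₂ q := by
      ext r
      constructor
      · rintro ⟨y, rfl⟩
        exact hmemF y
      · intro hr
        obtain ⟨hr1, hr2⟩ := (Set.mem_prod).mp hr
        rw [mem_singleton_iff] at hr2
        refine ⟨⟨(r : X × ℝ).1, hr1⟩, ?_⟩
        apply Subtype.ext
        exact Prod.ext rfl hr2.symm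
    constructor
    · have hcpt : IsCompact (Set.univ : Set (F x)) :=
        isCompact_iff_isCompact_univ.mp (hFc x)
      have := hcpt.image hfc
      rw [Set.image_univ, hrange] at this
      exact this
    · -- the homeomorphism
      have hmem1 : ∀ y : F x, f y ∈ FBarSub F α N P₁ P₂ q := by
        intro y; rw [← hrange]; exact ⟨y, rfl⟩
      have hmem2 : ∀ r : FBarSub F α N P₁ P₂ q,
          (((r : XBarSet N P₁ P₂) : X × ℝ)).1 ∈ F x := by
        intro r; exact ((Set.mem_prod).mp r.2).1
      refine ⟨{
        toFun := fun y => ⟨f y, hmem1 y⟩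
        invFun := fun r => ⟨(((r : XBarSet N P₁ P₂) : X × ℝ)).1, hmem2 r⟩
        left_inv := by intro y; rfl
        right_inv := by
          intro r
          apply Subtype.ext
          apply Subtype.ext
          have hr2 := ((Set.mem_prod).mp r.2).2
          rw [mem_singleton_iff] at hr2
          exact Prod.ext rfl hr2.symm
        continuous_toFun := Continuous.subtype_mk hfc hmem1
        continuous_invFun := Continuous.subtype_mk
          (continuous_fst.comp (continuous_subtype_val.comp
            continuous_subtype_val)) hmem2 }⟩
end
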